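/- arXiv:0905.3939 — 2 statements merged into one kernel-verified Lean document; each statement's English description precedes it below -/
import Mathlib

section
/- For every (a,b) ∈ ℂ² with (a,b) ≠ (0,0), the polynomial a·x + b·(x² + y³) in ℂ[x,y] is irreducible. -/
open MvPolynomial

noncomputable def innerEquiv : MvPolynomial (Fin 1) ℂ ≃ₐ[ℂ] Polynomial ℂ :=
  (MvPolynomial.finSuccEquiv ℂ 0).trans
    (Polynomial.mapAlgEquiv (MvPolynomial.isEmptyAlgEquiv ℂ (Fin 0)))

noncomputable def E0 : MvPolynomial (Fin 2) ℂ ≃ₐ[ℂ] Polynomial (Polynomial ℂ) :=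
  (MvPolynomial.finSuccEquiv ℂ 1).trans (Polynomial.mapAlgEquiv innerEquiv)

noncomputable def E1 : MvPolynomial (Fin 2) ℂ ≃ₐ[ℂ] Polynomial (Polynomial ℂ) :=
  (MvPolynomial.renameEquiv ℂ (Equiv.swap (0 : Fin 2) 1)).trans E0

lemma inner_X : innerEquiv (X 0) = Polynomial.X := by
  rw [innerEquiv, AlgEquiv.trans_apply, MvPolynomial.finSuccEquiv_X_zero]
  simp [Polynomial.mapAlgEquiv]

lemma E0_C (c : ℂ) : E0 (C c) = Polynomial.C (Polynomial.C c) := by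
  rw [show (C c : MvPolynomial (Fin 2) ℂ) = algebraMap ℂ _ c from rfl, AlgEquiv.commutes]
  rfl

lemma E0_X0 : E0 (X 0) = Polynomial.X := by
  rw [E0, AlgEquiv.trans_apply, MvPolynomial.finSuccEquiv_X_zero]
  simp [Polynomial.mapAlgEquiv]

lemma E0_X1 : E0 (X 1) = Polynomial.C Polynomial.X := by
  rw [E0, AlgEquiv.trans_apply,
    show (X 1 : MvPolynomial (Fin 2) ℂ) = X (Fin.succ 0) from rfl,
    MvPolynomial.finSuccEquiv_X_succ]
  simp [Polynomial.mapAlgEquiv, inner_X]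

lemma E1_C (c : ℂ) : E1 (C c) = Polynomial.C (Polynomial.C c) := by
  rw [E1, AlgEquiv.trans_apply, MvPolynomial.renameEquiv_apply, MvPolynomial.rename_C, E0_C]

lemma E1_X0 : E1 (X 0) = Polynomial.C Polynomial.X := by
  rw [E1, AlgEquiv.trans_apply, MvPolynomial.renameEquiv_apply, MvPolynomial.rename_X]
  simp [E0_X1]

lemma E1_X1 : E1 (X 1) = Polynomial.X := by
  rw [E1, AlgEquiv.trans_apply, MvPolynomial.renameEquiv_apply, MvPolynomial.rename_X]
  simp [E0_X0]

lemma cubic_irred (q : Polynomial ℂ) (hq : q.natDegree = 2) :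
    Irreducible (Polynomial.X ^ 3 + Polynomial.C q : Polynomial (Polynomial ℂ)) := by
  have hq0 : q ≠ 0 := fun h => by simp [h] at hq
  have hm : (Polynomial.X ^ 3 + Polynomial.C q : Polynomial (Polynomial ℂ)).Monic :=
    Polynomial.monic_X_pow_add (lt_of_le_of_lt Polynomial.degree_C_le (by norm_num))
  rw [hm.irreducible_iff_irreducible_map_fraction_map (K := RatFunc ℂ)]
  have hmap : (Polynomial.X ^ 3 + Polynomial.C q : Polynomial (Polynomial ℂ)).map
      (algebraMap (Polynomial ℂ) (RatFunc ℂ)) =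
      Polynomial.X ^ 3 - Polynomial.C (-(algebraMap (Polynomial ℂ) (RatFunc ℂ) q)) := by
    rw [Polynomial.map_add, Polynomial.map_pow, Polynomial.map_X, Polynomial.map_C, map_neg,
      sub_neg_eq_add]
  rw [hmap]
  refine X_pow_sub_C_irreducible_of_prime Nat.prime_three ?_
  intro t ht
  have hq' : algebraMap (Polynomial ℂ) (RatFunc ℂ) q ≠ 0 := by
    simpa using hq0
  have hs : (-t) ^ 3 = algebraMap (Polynomial ℂ) (RatFunc ℂ) q := by
    rw [Odd.neg_pow ⟨1, by norm_num⟩, ht, neg_neg]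
  have hsne : (-t) ≠ 0 := by
    rintro h
    rw [h] at hs
    simp at hs
    exact hq' hs.symm
  have h1 : RatFunc.intDegree ((-t) ^ 3) = 3 * RatFunc.intDegree (-t) := by
    rw [pow_succ, pow_succ, pow_one, RatFunc.intDegree_mul (mul_ne_zero hsne hsne) hsne,
      RatFunc.intDegree_mul hsne hsne]
    ring
  rw [hs, RatFunc.intDegree_polynomial, hq] at h1
  omega

theorem stmt_1 (a b : ℂ) (hab : (a, b) ≠ (0, 0)) :
    Irreducible (C a * X 0 + C b * (X 0 ^ 2 + X 1 ^ 3) : MvPolynomial (Fin 2) ℂ) := by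
  by_cases hb : b = 0
  · have ha : a ≠ 0 := by
      intro h; exact hab (by simp [h, hb])
    subst hb
    have heq : (C a * X 0 + C 0 * (X 0 ^ 2 + X 1 ^ 3) : MvPolynomial (Fin 2) ℂ)
        = C a * X 0 := by simp
    rw [heq]
    refine (MulEquiv.irreducible_iff E0).mp ?_
    rw [map_mul, E0_C, E0_X0]
    have hu : IsUnit (Polynomial.C (Polynomial.C a) : Polynomial (Polynomial ℂ)) := by
      refine Polynomial.isUnit_C.mpr (Polynomial.isUnit_C.mpr ?_)
      exact isUnit_iff_ne_zero.mpr ha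
    exact (associated_unit_mul_left _ _ hu).symm.irreducible Polynomial.irreducible_X
  · have hu : IsUnit (C b : MvPolynomial (Fin 2) ℂ) :=
      (isUnit_iff_ne_zero.mpr hb).map (C : ℂ →+* MvPolynomial (Fin 2) ℂ)
    set c : ℂ := a / b with hc
    have heq : (C a * X 0 + C b * (X 0 ^ 2 + X 1 ^ 3) : MvPolynomial (Fin 2) ℂ)
        = C b * (X 1 ^ 3 + (X 0 ^ 2 + C c * X 0)) := by
      have key : (C b : MvPolynomial (Fin 2) ℂ) * C c = C a := by
        rw [← MvPolynomial.C_mul, hc, mul_comm, div_mul_cancel₀ a hb]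
      calc (C a * X 0 + C b * (X 0 ^ 2 + X 1 ^ 3) : MvPolynomial (Fin 2) ℂ)
          = C b * C c * X 0 + C b * (X 0 ^ 2 + X 1 ^ 3) := by rw [key]
        _ = C b * (X 1 ^ 3 + (X 0 ^ 2 + C c * X 0)) := by ring
    rw [heq]
    have hirr : Irreducible (X 1 ^ 3 + (X 0 ^ 2 + C c * X 0) : MvPolynomial (Fin 2) ℂ) := by
      refine (MulEquiv.irreducible_iff E1).mp ?_
      rw [map_add, map_pow, map_add, map_pow, map_mul, E1_C, E1_X0, E1_X1]
      rw [← Polynomial.C_pow, ← Polynomial.C_mul, ← Polynomial.C_add]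
      refine cubic_irred _ ?_
      compute_degree!
    exact ((associated_unit_mul_left _ _ hu).symm.irreducible hirr)
end

section
/- Every injective polynomial map from ℂ² to ℂ² is surjective, and hence bijective. -/
open MvPolynomial

/-- A polynomial map of `ℂ²`. -/
def IsPolyMap (F : ℂ × ℂ → ℂ × ℂ) : Prop :=
  ∃ P Q : MvPolynomial (Fin 2) ℂ,
    ∀ p : ℂ × ℂ, F p = (eval ![p.1, p.2] P, eval ![p.1, p.2] Q)

theorem stmt_3 (F : ℂ × ℂ → ℂ × ℂ) (hF : IsPolyMap F)
    (hinj : Function.Injective F) :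
    Function.Surjective F ∧ Function.Bijective F := by
  obtain ⟨P, Q, hPQ⟩ := hF
  let ps : Fin 2 → MvPolynomial (Fin 2) ℂ := ![P, Q]
  let e : (ℂ × ℂ) ≃ (Fin 2 → ℂ) :=
    { toFun := fun p => ![p.1, p.2]
      invFun := fun v => (v 0, v 1)
      left_inv := fun p => rfl
      right_inv := fun v => by funext i; fin_cases i <;> simp }
  have key : (fun v i => eval v (ps i)) = e ∘ F ∘ e.symm := by
    funext v i
    have hv : ![v 0, v 1] = v := funext fun j => by fin_cases j <;> rfl
    rw [show (⇑e ∘ F ∘ ⇑e.symm) v i = e (F (v 0, v 1)) i from rfl, hPQ (v 0, v 1)]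
    fin_cases i <;> simp [ps, e, hv] <;> rfl
  have hinj' : Function.Injective (fun v i => eval v (ps i)) := by
    rw [key]
    exact e.injective.comp (hinj.comp e.symm.injective)
  have hsurj' := ax_grothendieck_univ ps hinj'
  rw [key] at hsurj'
  have hFsurj : Function.Surjective F := by
    intro y
    obtain ⟨v, hv⟩ := hsurj' (e y)
    exact ⟨e.symm v, by simpa using congrArg e.symm hv⟩
  exact ⟨hFsurj, hinj, hFsurj⟩
end
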